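/- For the affine action sigma^{-1}{sigma{0}} = 0 one obtains the matrix identities (D'B)_0 + D'(AB')_0 + B'(CD')_0 = 0 and (A'C)_0 + C'(AB')_0 + A'(CD')_0 = 0 over F_2, for any sigma = (A B; C D) in Sp(g, F_2). -/
import Mathlib


open Matrix BigOperators

/-- A characteristic: a vector in `F₂^{2g}`, indexed by `Fin g ⊕ Fin g`
(the first block is `a`, the second is `b`). -/
abbrev Char2 (g : ℕ) := (Fin g ⊕ Fin g) → ZMod 2

/-- The `a`-part of a characteristic. -/
def aPart {g : ℕ} (m : Char2 g) : Fin g → ZMod 2 := fun i => m (Sum.inl i)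

/-- The `b`-part of a characteristic. -/
def bPart {g : ℕ} (m : Char2 g) : Fin g → ZMod 2 := fun i => m (Sum.inr i)

/-- A characteristic `m = (a;b)` is even if `a'b = 0`. -/
def IsEvenChar {g : ℕ} (m : Char2 g) : Prop := aPart m ⬝ᵥ bPart m = 0

/-- A characteristic `m = (a;b)` is odd if `a'b = 1`. -/
def IsOddChar {g : ℕ} (m : Char2 g) : Prop := aPart m ⬝ᵥ bPart m = 1

instance {g : ℕ} : DecidablePred (IsEvenChar (g := g)) := fun m => by
  unfold IsEvenChar; infer_instance

instance {g : ℕ} : DecidablePred (IsOddChar (g := g)) := fun m => by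
  unfold IsOddChar; infer_instance

/-- The type of `2g × 2g` matrices over `F₂`. -/
abbrev SpMat (g : ℕ) := Matrix (Fin g ⊕ Fin g) (Fin g ⊕ Fin g) (ZMod 2)

/-- The offset `((CD')₀ ; (AB')₀)` appearing in the affine action. -/
def offVec {g : ℕ} (σ : SpMat g) : Char2 g :=
  Sum.elim (Matrix.diag (σ.toBlocks₂₁ * (σ.toBlocks₂₂)ᵀ))
           (Matrix.diag (σ.toBlocks₁₁ * (σ.toBlocks₁₂)ᵀ))

/-- The affine action `σ{m} = (σ')⁻¹ m + ((CD')₀ ; (AB')₀)`. -/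
noncomputable def affAct {g : ℕ} (σ : SpMat g) (m : Char2 g) : Char2 g :=
  (σᵀ)⁻¹ *ᵥ m + offVec σ

/-- The sign `(-1)^x` for `x : F₂`. -/
def sgn2 (x : ZMod 2) : ℤ := if x = 0 then 1 else -1

/-- The quadratic form `M[x] = x' M x`. -/
def quadF {g : ℕ} (M : Matrix (Fin g) (Fin g) (ZMod 2)) (x : Fin g → ZMod 2) : ZMod 2 :=
  x ⬝ᵥ (M *ᵥ x)

/-- `ε_m(σ) = (-1)^{tr(B'C) + (B'D)[a] + (A'C)[b]}`. -/
def epsChar {g : ℕ} (m : Char2 g) (σ : SpMat g) : ℤ :=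
  sgn2 (Matrix.trace ((σ.toBlocks₁₂)ᵀ * σ.toBlocks₂₁)
    + quadF ((σ.toBlocks₁₂)ᵀ * σ.toBlocks₂₂) (aPart m)
    + quadF ((σ.toBlocks₁₁)ᵀ * σ.toBlocks₂₁) (bPart m))

/-- The symplectic pairing `<m,n> = a'β + b'α`. -/
def pairing {g : ℕ} (m n : Char2 g) : ZMod 2 :=
  aPart m ⬝ᵥ bPart n + bPart m ⬝ᵥ aPart n

/-- `e(m,n) = (-1)^{<m,n>}`. -/
def eSign {g : ℕ} (m n : Char2 g) : ℤ := sgn2 (pairing m n)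


lemma zmod2_mul_self : ∀ a : ZMod 2, a * a = a := by decide

lemma mneg {α β : Type*} (M : Matrix α β (ZMod 2)) : -M = M := by
  ext i j; simp [CharTwo.neg_eq]

lemma maddself {α β : Type*} (M : Matrix α β (ZMod 2)) : M + M = 0 := by
  ext i j; simp [CharTwo.add_self_eq_zero]

lemma madd_cancel {α β : Type*} {M N : Matrix α β (ZMod 2)} (h : M + N = 0) : N = M := by
  have := neg_eq_of_add_eq_zero_right h
  rw [← this, mneg]

lemma dot_symm_diag {g : ℕ} (S : Matrix (Fin g) (Fin g) (ZMod 2)) (hS : Sᵀ = S)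
    (x : Fin g → ZMod 2) : x ⬝ᵥ (S *ᵥ x) = S.diag ⬝ᵥ x := by
  classical
  have hsym : ∀ a b, S a b = S b a := fun a b => congrFun (congrFun hS b) a
  set N : Matrix (Fin g) (Fin g) (ZMod 2) := Matrix.of fun i j => if i < j then S i j else 0 with hN
  have hdecomp : S = Matrix.diagonal S.diag + N + Nᵀ := by
    ext i j
    rcases lt_trichotomy i j with h | h | h
    · simp [N, Matrix.diagonal_apply, h, h.ne, not_lt.mpr h.le, Matrix.diag]
    · subst h; simp [N, Matrix.diag]
    · simp [N, Matrix.diagonal_apply, h, h.ne', not_lt.mpr h.le, Matrix.diag, hsym i j]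
  conv_lhs => rw [hdecomp]
  rw [Matrix.add_mulVec, Matrix.add_mulVec, dotProduct_add, dotProduct_add]
  have h1 : x ⬝ᵥ (Matrix.diagonal S.diag *ᵥ x) = S.diag ⬝ᵥ x := by
    simp only [dotProduct, Matrix.mulVec_diagonal]
    exact Finset.sum_congr rfl fun i _ => by
      rw [mul_comm (S.diag i), ← mul_assoc, zmod2_mul_self, mul_comm]
  have h2 : x ⬝ᵥ (Nᵀ *ᵥ x) = x ⬝ᵥ (N *ᵥ x) := by
    rw [Matrix.dotProduct_mulVec, Matrix.vecMul_transpose, dotProduct_comm]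
  rw [h1, h2, add_assoc, CharTwo.add_self_eq_zero, add_zero]

lemma mulVec_diag_eq {g : ℕ} (S M : Matrix (Fin g) (Fin g) (ZMod 2)) (hS : Sᵀ = S) :
    Mᵀ *ᵥ S.diag = (Mᵀ * S * M).diag := by
  funext i
  have h := dot_symm_diag S hS (fun j => M j i)
  simp only [Matrix.mulVec, Matrix.diag, dotProduct, Matrix.mul_apply,
    Matrix.transpose_apply, Finset.sum_mul, Finset.mul_sum] at h ⊢
  calc ∑ x, M x i * S x x
      = ∑ x, S x x * M x i := Finset.sum_congr rfl fun _ _ => mul_comm _ _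
    _ = ∑ x, ∑ l, M x i * (S x l * M l i) := h.symm
    _ = ∑ x, ∑ l, M l i * S l x * M x i := by
        rw [Finset.sum_comm]
        exact Finset.sum_congr rfl fun x _ => Finset.sum_congr rfl fun l _ => by ring

lemma blocks_rel {g : ℕ} (A B C D : Matrix (Fin g) (Fin g) (ZMod 2))
    (h : fromBlocks A B C D ∈ Matrix.symplecticGroup (Fin g) (ZMod 2)) :
    A*Bᵀ = B*Aᵀ ∧ A*Dᵀ = 1 + B*Cᵀ ∧ C*Dᵀ = D*Cᵀ := by
  rw [SymplecticGroup.mem_iff, Matrix.J, fromBlocks_transpose, fromBlocks_multiply,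
    fromBlocks_multiply] at h
  simp only [Matrix.mul_zero, Matrix.mul_one, zero_add, add_zero,
    Matrix.mul_neg, Matrix.neg_mul, Matrix.zero_mul, Matrix.one_mul, mneg] at h
  rw [fromBlocks_inj] at h
  obtain ⟨h1, h2, h3, h4⟩ := h
  refine ⟨madd_cancel h1, ?_, madd_cancel h4⟩
  have := congrArg (fun M => B*Cᵀ + M) h2
  rw [← add_assoc, maddself, zero_add] at this
  rw [this, add_comm]

/-- the matrix identities `(D'B)₀ + D'(AB')₀ + B'(CD')₀ = 0` and
`(A'C)₀ + C'(AB')₀ + A'(CD')₀ = 0` over `F₂` for `σ = (A B; C D)` symplectic. -/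
theorem diagonal_identities (g : ℕ) (σ : SpMat g)
    (hσ : σ ∈ Matrix.symplecticGroup (Fin g) (ZMod 2)) :
    (Matrix.diag ((σ.toBlocks₂₂)ᵀ * σ.toBlocks₁₂)
      + (σ.toBlocks₂₂)ᵀ *ᵥ Matrix.diag (σ.toBlocks₁₁ * (σ.toBlocks₁₂)ᵀ)
      + (σ.toBlocks₁₂)ᵀ *ᵥ Matrix.diag (σ.toBlocks₂₁ * (σ.toBlocks₂₂)ᵀ) = 0) ∧
    (Matrix.diag ((σ.toBlocks₁₁)ᵀ * σ.toBlocks₂₁)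
      + (σ.toBlocks₂₁)ᵀ *ᵥ Matrix.diag (σ.toBlocks₁₁ * (σ.toBlocks₁₂)ᵀ)
      + (σ.toBlocks₁₁)ᵀ *ᵥ Matrix.diag (σ.toBlocks₂₁ * (σ.toBlocks₂₂)ᵀ) = 0) := by
  set A := σ.toBlocks₁₁ with hA
  set B := σ.toBlocks₁₂ with hB
  set C := σ.toBlocks₂₁ with hC
  set D := σ.toBlocks₂₂ with hD
  have hfb : σ = fromBlocks A B C D := (fromBlocks_toBlocks σ).symm
  rw [hfb] at hσ
  obtain ⟨r1, r2, r3⟩ := blocks_rel A B C D hσ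
  have hσT := SymplecticGroup.transpose_mem hσ
  rw [fromBlocks_transpose] at hσT
  obtain ⟨s1, s2, s3⟩ := blocks_rel Aᵀ Cᵀ Bᵀ Dᵀ hσT
  simp only [transpose_transpose] at s1 s2 s3
  -- s1 : Aᵀ * C = Cᵀ * A, s2 : Aᵀ * D = 1 + Cᵀ * B, s3 : Bᵀ * D = Dᵀ * B
  have hDA : Dᵀ * A = 1 + Bᵀ * C := by
    have := congrArg Matrix.transpose s2
    rwa [transpose_mul, transpose_add, transpose_one, transpose_mul,
      transpose_transpose, transpose_transpose] at this
  have hsym1 : (A * Bᵀ)ᵀ = A * Bᵀ := by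
    rw [transpose_mul, transpose_transpose, ← r1]
  have hsym2 : (C * Dᵀ)ᵀ = C * Dᵀ := by
    rw [transpose_mul, transpose_transpose, ← r3]
  constructor
  · rw [mulVec_diag_eq _ _ hsym1, mulVec_diag_eq _ _ hsym2]
    have e1 : Dᵀ * (A * Bᵀ) * D = Bᵀ * D + Bᵀ * C * (Bᵀ * D) := by
      rw [show Dᵀ * (A * Bᵀ) * D = Dᵀ * A * (Bᵀ * D) from by noncomm_ring, hDA,
        add_mul, one_mul]
    have e2 : Bᵀ * (C * Dᵀ) * B = Bᵀ * C * (Bᵀ * D) := by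
      rw [show Bᵀ * (C * Dᵀ) * B = Bᵀ * C * (Dᵀ * B) from by noncomm_ring, ← s3]
    rw [e1, e2, ← Matrix.diag_add, ← Matrix.diag_add]
    have e3 : Dᵀ * B + (Bᵀ * D + Bᵀ * C * (Bᵀ * D)) + Bᵀ * C * (Bᵀ * D)
        = Dᵀ * B + Bᵀ * D + (Bᵀ * C * (Bᵀ * D) + Bᵀ * C * (Bᵀ * D)) := by abel
    rw [e3, maddself, add_zero]
    funext i
    simp only [Matrix.diag, Matrix.add_apply, Matrix.mul_apply, Matrix.transpose_apply]
    rw [show ∑ j, B j i * D j i = ∑ j, D j i * B j i from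
      Finset.sum_congr rfl fun _ _ => mul_comm _ _, CharTwo.add_self_eq_zero]
    rfl
  · rw [mulVec_diag_eq _ _ hsym1, mulVec_diag_eq _ _ hsym2]
    have e1 : Cᵀ * (A * Bᵀ) * C = Aᵀ * C * (Bᵀ * C) := by
      rw [show Cᵀ * (A * Bᵀ) * C = Cᵀ * A * (Bᵀ * C) from by noncomm_ring, ← s1]
    have e2 : Aᵀ * (C * Dᵀ) * A = Aᵀ * C + Aᵀ * C * (Bᵀ * C) := by
      rw [show Aᵀ * (C * Dᵀ) * A = Aᵀ * C * (Dᵀ * A) from by noncomm_ring, hDA,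
        mul_add, mul_one]
    rw [e1, e2, ← Matrix.diag_add, ← Matrix.diag_add]
    have e3 : Aᵀ * C + Aᵀ * C * (Bᵀ * C) + (Aᵀ * C + Aᵀ * C * (Bᵀ * C))
        = (Aᵀ * C + Aᵀ * C * (Bᵀ * C)) + (Aᵀ * C + Aᵀ * C * (Bᵀ * C)) := by abel
    rw [e3, maddself, Matrix.diag_zero]
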